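/- Let Q be an Ω-algebra and let (X,τ), (Y,η) be Q-topological spaces. A function f : X → Y is Q-continuous from (X,τ) to (Y,η) if and only if for every Q-continuous map q : (Y,η) → (S,u) into the Q-Sierpinski space, the composite q ∘ f : (X,τ) → (S,u) is Q-continuous. -/

import Mathlib

universe u v w x

/-- Closure of a set of `Q`-valued functions on `X` under the pointwise
Ω-algebra operations `ops`. -/
def Closed {Q : Type u} {I : Type v} {n : I → Type w} (ops : ∀ i, (n i → Q) → Q)
    {X : Type x} (B : Set (X → Q)) : Prop :=
  ∀ i (p : n i → X → Q), (∀ j, p j ∈ B) → (fun x => ops i (fun j => p j x)) ∈ B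

/-- A `Q`-topology on `X`: a nonempty subset of `Q^X` closed under the
pointwise operations, i.e. a subalgebra of the power algebra. -/
def IsQTop {Q : Type u} {I : Type v} {n : I → Type w} (ops : ∀ i, (n i → Q) → Q)
    {X : Type x} (τ : Set (X → Q)) : Prop :=
  τ.Nonempty ∧ Closed ops τ

/-- The subalgebra of `Q^X` generated by `S`: the intersection of all
subalgebras containing `S`. -/
def gen {Q : Type u} {I : Type v} {n : I → Type w} (ops : ∀ i, (n i → Q) → Q)
    {X : Type x} (S : Set (X → Q)) : Set (X → Q) :=
  ⋂₀ {B | S ⊆ B ∧ IsQTop ops B}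

/-- `Q`-continuity of `f : (X,τ) → (Y,η)` : preimages `α ∘ f` of members of `η`
belong to `τ`. -/
def QCont {Q : Type u} {I : Type v} {n : I → Type w} (ops : ∀ i, (n i → Q) → Q)
    {X : Type x} {Y : Type x} (τ : Set (X → Q)) (η : Set (Y → Q)) (f : X → Y) : Prop :=
  ∀ α ∈ η, (fun x => α (f x)) ∈ τ

/-- The `Q`-Sierpinski topology on `S = Q`: the subalgebra of `Q^Q` generated
by the identity map. -/
def sierp {Q : Type u} {I : Type v} {n : I → Type w} (ops : ∀ i, (n i → Q) → Q) :
    Set (Q → Q) :=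
  gen ops ({id} : Set (Q → Q))

/-!
Evaluating a `Q`-continuous map `q : (Y,η) → (S,u)` at the identity of `Q`, which lies in `u`,
shows `q ∈ η`. Conversely, for `q ∈ η` the maps `β : Q → Q` with `β ∘ q ∈ η` form a subalgebra of
`Q^Q` containing the identity, hence containing all of `u`; so the `Q`-continuous maps into the
Sierpinski space are exactly the members of `η`. The theorem follows: one direction is composition of
`Q`-continuous maps, the other tests `f` against each `α ∈ η` viewed as such a map.
-/

section

variable {Q : Type u} {I : Type v} {n : I → Type w} (ops : ∀ i, (n i → Q) → Q)

lemma subset_gen {X : Type x} (S : Set (X → Q)) : S ⊆ gen ops S :=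
  fun _ hα _ hB => hB.1 hα

lemma gen_subset {X : Type x} {S B : Set (X → Q)} (hS : S ⊆ B) (hB : IsQTop ops B) : gen ops S ⊆ B :=
  Set.sInter_subset_of_mem ⟨hS, hB⟩

lemma id_mem_sierp : (id : Q → Q) ∈ sierp ops :=
  subset_gen ops _ rfl

lemma closed_comap {X : Type x} {η : Set (X → Q)} (hη : Closed ops η) (q : X → Q) :
    Closed ops {β : Q → Q | (fun x => β (q x)) ∈ η} :=
  fun i p hp => hη i (fun j x => p j (q x)) hp

lemma QCont.comp {X Y Z : Type x} {τ : Set (X → Q)} {η : Set (Y → Q)} {ζ : Set (Z → Q)}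
    {f : X → Y} {g : Y → Z} (hg : QCont ops η ζ g) (hf : QCont ops τ η f) :
    QCont ops τ ζ (fun x => g (f x)) :=
  fun α hα => hf _ (hg α hα)

lemma mem_of_qcont_sierp {Y : Type u} {η : Set (Y → Q)} {q : Y → Q}
    (hq : QCont ops η (sierp ops) q) : q ∈ η :=
  hq id (id_mem_sierp ops)

lemma qcont_sierp_of_mem {Y : Type u} {η : Set (Y → Q)} (hη : Closed ops η) {q : Y → Q}
    (hq : q ∈ η) : QCont ops η (sierp ops) q := by
  have hid : id ∈ {β : Q → Q | (fun y => β (q y)) ∈ η} := hq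
  exact gen_subset ops (Set.singleton_subset_iff.2 hid) ⟨⟨id, hid⟩, closed_comap ops hη q⟩

end

theorem stmt_12_general {Q : Type u} {I : Type v} {n : I → Type w} (ops : ∀ i, (n i → Q) → Q)
    {X Y : Type u} (τ : Set (X → Q)) (η : Set (Y → Q))
    (hη : IsQTop ops η) (f : X → Y) :
    QCont ops τ η f ↔
      ∀ q : Y → Q, QCont ops η (sierp ops) q →
        QCont ops τ (sierp ops) (fun x => q (f x)) :=
  ⟨fun hf _ hq => hq.comp ops hf,
    fun h α hα => mem_of_qcont_sierp ops (h α (qcont_sierp_of_mem ops hη.2 hα))⟩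

theorem stmt_12 {Q : Type u} {I : Type v} {n : I → Type w} (ops : ∀ i, (n i → Q) → Q)
    {X Y : Type u} (τ : Set (X → Q)) (η : Set (Y → Q))
    (hτ : IsQTop ops τ) (hη : IsQTop ops η) (f : X → Y) :
    QCont ops τ η f ↔
      ∀ q : Y → Q, QCont ops η (sierp ops) q →
        QCont ops τ (sierp ops) (fun x => q (f x)) :=
  stmt_12_general ops τ η hη f
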